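/- Let G⁽¹⁾ and G⁽²⁾ be finite connected simple graphs, let λ₂⁽¹⁾ be the second-smallest eigenvalue of the Laplacian of G⁽¹⁾, let λ_max⁽²⁾ be the largest eigenvalue of the Laplacian of G⁽²⁾, and let n⁽²⁾ be the number of vertices of G⁽²⁾. Let e⁽¹⁾ = {v⁽¹⁾, w⁽¹⁾} be an edge of G⁽¹⁾ with effective resistance ω = ω⁽¹⁾_{v⁽¹⁾,w⁽¹⁾}, and let v⁽²⁾ be any vertex of G⁽²⁾. Then the effective resistance in the Cartesian product G⁽¹⁾ □ G⁽²⁾ across the edge joining v⁽¹⁾⊗v⁽²⁾ and w⁽¹⁾⊗v⁽²⁾ satisfies ω_e ≥ (1/n⁽²⁾ + (1 − 1/n⁽²⁾) · λ₂⁽¹⁾/(λ₂⁽¹⁾ + λ_max⁽²⁾)) · ω. -/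

import Mathlib

open Classical Matrix

/-- The four Penrose conditions characterizing the Moore–Penrose pseudoinverse
of a real square matrix. -/
def IsMoorePenroseInverse {V : Type*} [Fintype V] [DecidableEq V]
    (L P : Matrix V V ℝ) : Prop :=
  L * P * L = L ∧ P * L * P = P ∧ (L * P)ᵀ = L * P ∧ (P * L)ᵀ = P * L

/-- The Moore–Penrose pseudoinverse of a real square matrix. -/
noncomputable def pinv {V : Type*} [Fintype V] [DecidableEq V]
    (L : Matrix V V ℝ) : Matrix V V ℝ :=
  if h : ∃ P, IsMoorePenroseInverse L P then h.choose else 0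

/-- Effective resistance between `x` and `y` computed from a (weighted) Laplacian `L`. -/
noncomputable def effResM {V : Type*} [Fintype V] [DecidableEq V]
    (L : Matrix V V ℝ) (x y : V) : ℝ :=
  pinv L x x + pinv L y y - 2 * pinv L x y

/-- Effective resistance between vertices `x` and `y` of a simple graph `G`. -/
noncomputable def effRes {V : Type*} [Fintype V] [DecidableEq V]
    (G : SimpleGraph V) (x y : V) : ℝ :=
  effResM (G.lapMatrix ℝ) x y

/-- The node resistance curvature `p_x = 1 - (1/2) ∑_{y ~ x} ω_{x,y}`. -/
noncomputable def curv {V : Type*} [Fintype V] [DecidableEq V]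
    (G : SimpleGraph V) (x : V) : ℝ :=
  1 - (1/2) * ∑ y : V, if G.Adj x y then effRes G x y else 0

/-- The grid graph `P_m □ P_n` (vertex `(i,j)` of the paper corresponds to
`(⟨i-1⟩, ⟨j-1⟩) : Fin m × Fin n`). -/
def grid (m n : ℕ) : SimpleGraph (Fin m × Fin n) :=
  (SimpleGraph.pathGraph m).boxProd (SimpleGraph.pathGraph n)

/-!
By Thomson's principle, `ω_{x,y} ≥ 2 (z x - z y) - zᵀ L z` for every potential `z`, with equality
for `z = L⁺ (eₓ - e_y)`. On `G₁ □ G₂` take `z = φ ⊗ f`, where `φ = L₁⁺ (e_{v₁} - e_{w₁})` has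
`φ v₁ - φ w₁ = φᵀ L₁ φ = ω` and, being orthogonal to `ker L₁`, `λ₂ ‖φ‖² ≤ ω`; and
`f = t e_{v₂} + (1 - t) / n`. As the product Laplacian is `L₁ ⊗ I + I ⊗ L₂` and `L₂` kills
constants, the energy of `φ ⊗ f` is `ω ‖f‖² + ‖φ‖² t² deg v₂`, and `deg v₂ ≤ λ_max (1 - 1/n)` is the
Rayleigh bound for `e_{v₂} - 1/n`. The choice `t = λ₂ / (λ₂ + λ_max)` optimizes the resulting bound.
-/

namespace Matrix.IsHermitian

variable {n : Type*} [Fintype n] [DecidableEq n] {A : Matrix n n ℝ}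

lemma star_eigenvectorUnitary_mul (hA : A.IsHermitian) :
    star (hA.eigenvectorUnitary : Matrix n n ℝ) * A
      = diagonal hA.eigenvalues * star (hA.eigenvectorUnitary : Matrix n n ℝ) := by
  have h := hA.conjStarAlgAut_star_eigenvectorUnitary
  simp only [Unitary.conjStarAlgAut_apply, Unitary.coe_star, star_star, RCLike.ofReal_real_eq_id,
    Function.id_comp] at h
  rw [← h, mul_assoc _ _ (star _), Unitary.mul_star_self_of_mem hA.eigenvectorUnitary.2, mul_one]

lemma star_eigenvectorUnitary_mulVec_mulVec (hA : A.IsHermitian) (x : n → ℝ) :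
    star (hA.eigenvectorUnitary : Matrix n n ℝ) *ᵥ (A *ᵥ x)
      = hA.eigenvalues * (star (hA.eigenvectorUnitary : Matrix n n ℝ) *ᵥ x) := by
  ext i
  rw [mulVec_mulVec, star_eigenvectorUnitary_mul, ← mulVec_mulVec, mulVec_diagonal, Pi.mul_apply]

lemma dotProduct_star_eigenvectorUnitary_mulVec (hA : A.IsHermitian) (x w : n → ℝ) :
    (star (hA.eigenvectorUnitary : Matrix n n ℝ) *ᵥ x) ⬝ᵥ
      (star (hA.eigenvectorUnitary : Matrix n n ℝ) *ᵥ w) = x ⬝ᵥ w := by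
  rw [dotProduct_mulVec, vecMul_mulVec, star_eq_conjTranspose,
    conjTranspose_eq_transpose_of_trivial, transpose_transpose,
    ← conjTranspose_eq_transpose_of_trivial, ← star_eq_conjTranspose,
    Unitary.mul_star_self_of_mem hA.eigenvectorUnitary.2, vecMul_one]

lemma dotProduct_mulVec_le_of_spectrum_le (hA : A.IsHermitian) {C : ℝ}
    (hC : ∀ μ ∈ spectrum ℝ A, μ ≤ C) (x : n → ℝ) : x ⬝ᵥ (A *ᵥ x) ≤ C * (x ⬝ᵥ x) := by
  rw [← hA.dotProduct_star_eigenvectorUnitary_mulVec x,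
    ← hA.dotProduct_star_eigenvectorUnitary_mulVec x, star_eigenvectorUnitary_mulVec_mulVec]
  simp only [dotProduct, Finset.mul_sum, Pi.mul_apply]
  refine Finset.sum_le_sum fun i _ => ?_
  nlinarith [hC _ (hA.eigenvalues_mem_spectrum_real i),
    mul_self_nonneg ((star (hA.eigenvectorUnitary : Matrix n n ℝ) *ᵥ x) i)]

lemma mul_dotProduct_le_of_le_spectrum (hA : A.IsHermitian) {c : ℝ}
    (hc : ∀ μ ∈ spectrum ℝ A, μ ≠ 0 → c ≤ μ) (w : n → ℝ) :
    c * ((A *ᵥ w) ⬝ᵥ (A *ᵥ w)) ≤ (A *ᵥ w) ⬝ᵥ (A *ᵥ (A *ᵥ w)) := by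
  rw [← hA.dotProduct_star_eigenvectorUnitary_mulVec (A *ᵥ w),
    ← hA.dotProduct_star_eigenvectorUnitary_mulVec (A *ᵥ w)]
  simp only [hA.star_eigenvectorUnitary_mulVec_mulVec, dotProduct, Finset.mul_sum, Pi.mul_apply]
  refine Finset.sum_le_sum fun i _ => ?_
  rcases eq_or_ne (hA.eigenvalues i) 0 with h | h
  · simp [h]
  · nlinarith [hc _ (hA.eigenvalues_mem_spectrum_real i) h,
      mul_self_nonneg (hA.eigenvalues i * (star (hA.eigenvectorUnitary : Matrix n n ℝ) *ᵥ w) i)]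

end Matrix.IsHermitian

lemma Matrix.PosSemidef.nonneg_of_mem_spectrum {n : Type*} [Fintype n] [DecidableEq n]
    {A : Matrix n n ℝ} (hA : A.PosSemidef) {μ : ℝ} (hμ : μ ∈ spectrum ℝ A) : 0 ≤ μ :=
  (posSemidef_iff_isHermitian_and_spectrum_nonneg.mp hA).2 hμ

lemma Matrix.PosSemidef.two_mul_dotProduct_sub_le {n : Type*} [Fintype n] {L : Matrix n n ℝ}
    (hL : L.PosSemidef) {u b : n → ℝ} (hu : L *ᵥ u = b) (z : n → ℝ) :
    2 * (b ⬝ᵥ z) - z ⬝ᵥ (L *ᵥ z) ≤ b ⬝ᵥ u := by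
  have hLt : Lᵀ = L := (isHermitian_iff_isSymm.mp hL.1).eq
  have h := hL.dotProduct_mulVec_nonneg (z - u)
  have huz : u ⬝ᵥ (L *ᵥ z) = b ⬝ᵥ z := by
    rw [← hLt, dotProduct_transpose_mulVec, hu, dotProduct_comm]
  simp only [star_trivial, mulVec_sub, dotProduct_sub, sub_dotProduct, hu, huz] at h
  rw [dotProduct_comm z b, dotProduct_comm u b] at h
  linarith

section MoorePenrose

variable {n : Type*} [Fintype n] [DecidableEq n]

lemma transpose_conjStarAlgAut_diagonal (U : unitary (Matrix n n ℝ)) (e : n → ℝ) :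
    (Unitary.conjStarAlgAut ℝ _ U (diagonal e))ᵀ = Unitary.conjStarAlgAut ℝ _ U (diagonal e) := by
  rw [← conjTranspose_eq_transpose_of_trivial, ← star_eq_conjTranspose, ← map_star,
    star_eq_conjTranspose, diagonal_conjTranspose, star_trivial]

lemma isMoorePenroseInverse_conjStarAlgAut_diagonal (U : unitary (Matrix n n ℝ)) (d : n → ℝ) :
    IsMoorePenroseInverse (Unitary.conjStarAlgAut ℝ _ U (diagonal d))
      (Unitary.conjStarAlgAut ℝ _ U (diagonal d⁻¹)) := by
  simp only [IsMoorePenroseInverse, ← map_mul, diagonal_mul_diagonal,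
    transpose_conjStarAlgAut_diagonal, and_true]
  constructor <;> congr 2 <;> funext i
  · exact mul_inv_mul_cancel (d i)
  · simpa using mul_inv_mul_cancel (d i)⁻¹

namespace IsMoorePenroseInverse

variable {L P Q : Matrix n n ℝ}

lemma unique (hP : IsMoorePenroseInverse L P) (hQ : IsMoorePenroseInverse L Q) : P = Q := by
  obtain ⟨hP₁, hP₂, hP₃, hP₄⟩ := hP
  obtain ⟨hQ₁, hQ₂, hQ₃, hQ₄⟩ := hQ
  have hLP : L * P = L * Q := calc
    L * P = (L * Q * L * P)ᵀ := by rw [hQ₁, hP₃]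
    _ = L * P * (L * Q) := by rw [Matrix.mul_assoc, transpose_mul, hP₃, hQ₃]
    _ = L * Q := by rw [← Matrix.mul_assoc, hP₁]
  have hPL : P * L = Q * L := calc
    P * L = (P * (L * Q * L))ᵀ := by rw [hQ₁, hP₄]
    _ = Q * L * (P * L) := by
      rw [← Matrix.mul_assoc, ← Matrix.mul_assoc, Matrix.mul_assoc, transpose_mul, hP₄, hQ₄]
    _ = Q * L := by rw [Matrix.mul_assoc, ← Matrix.mul_assoc L, hP₁]
  calc P = P * L * P := hP₂.symm
    _ = Q * L * Q := by rw [hPL, Matrix.mul_assoc, hLP, Matrix.mul_assoc]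
    _ = Q := hQ₂

lemma transpose (hP : IsMoorePenroseInverse L P) : IsMoorePenroseInverse Lᵀ Pᵀ := by
  obtain ⟨h₁, h₂, h₃, h₄⟩ := hP
  refine ⟨?_, ?_, ?_, ?_⟩
  · simpa only [transpose_mul, Matrix.mul_assoc] using congrArg Matrix.transpose h₁
  · simpa only [transpose_mul, Matrix.mul_assoc] using congrArg Matrix.transpose h₂
  · rw [← transpose_mul, h₄, h₄]
  · rw [← transpose_mul, h₃, h₃]

/-- `L P` is the orthogonal projection onto the range of `L`, so it fixes every vector
orthogonal to the kernel. -/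
lemma mulVec_mulVec_eq_self (hL : L.IsSymm) (hP : IsMoorePenroseInverse L P) {b : n → ℝ}
    (hb : ∀ v, L *ᵥ v = 0 → b ⬝ᵥ v = 0) : L *ᵥ (P *ᵥ b) = b := by
  obtain ⟨h₁, -, h₃, -⟩ := hP
  set c := b - L *ᵥ (P *ᵥ b)
  have hLLP : L * L * P = L := calc
    L * L * P = (L * P * L)ᵀ := by rw [transpose_mul, h₃, hL.eq, Matrix.mul_assoc]
    _ = L := by rw [h₁, hL.eq]
  have hLc : L *ᵥ c = 0 := by
    rw [mulVec_sub, mulVec_mulVec, mulVec_mulVec, hLLP, sub_self]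
  have hcc : c ⬝ᵥ c = 0 := by
    rw [sub_dotProduct, hb c hLc, dotProduct_comm, ← hL.eq, dotProduct_transpose_mulVec, hLc,
      dotProduct_zero, sub_zero]
  exact (sub_eq_zero.mp (dotProduct_self_eq_zero.mp hcc)).symm

end IsMoorePenroseInverse

lemma Matrix.IsHermitian.exists_isMoorePenroseInverse {L : Matrix n n ℝ} (hL : L.IsHermitian) :
    ∃ P, IsMoorePenroseInverse L P := by
  rw [hL.spectral_theorem]
  exact ⟨_, isMoorePenroseInverse_conjStarAlgAut_diagonal _ _⟩

variable {L : Matrix n n ℝ}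

lemma isMoorePenroseInverse_pinv (hL : L.IsHermitian) : IsMoorePenroseInverse L (pinv L) := by
  rw [pinv, dif_pos hL.exists_isMoorePenroseInverse]
  exact hL.exists_isMoorePenroseInverse.choose_spec

lemma isSymm_pinv (hL : L.IsHermitian) : (pinv L).IsSymm := by
  have h := (isMoorePenroseInverse_pinv hL).transpose
  rw [(isHermitian_iff_isSymm.mp hL).eq] at h
  exact h.unique (isMoorePenroseInverse_pinv hL)

end MoorePenrose

section EffectiveResistance

variable {n : Type*} [Fintype n] [DecidableEq n] {L : Matrix n n ℝ}

lemma single_sub_single_dotProduct (x y : n) (v : n → ℝ) :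
    (Pi.single x 1 - Pi.single y 1) ⬝ᵥ v = v x - v y := by
  rw [sub_dotProduct, single_dotProduct, single_dotProduct, one_mul, one_mul]

lemma effResM_eq_dotProduct (hL : L.IsHermitian) (x y : n) :
    effResM L x y
      = (Pi.single x 1 - Pi.single y 1) ⬝ᵥ (pinv L *ᵥ (Pi.single x 1 - Pi.single y 1)) := by
  have hsymm := (isSymm_pinv hL).apply x y
  simp only [single_sub_single_dotProduct, mulVec_sub, mulVec_single_one, Pi.sub_apply,
    col_apply]
  rw [effResM, hsymm]
  ring

variable {x y : n}

lemma single_sub_single_dotProduct_eq_zero (hxy : ∀ v, L *ᵥ v = 0 → v x = v y) {v : n → ℝ}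
    (hv : L *ᵥ v = 0) : (Pi.single x 1 - Pi.single y 1) ⬝ᵥ v = 0 := by
  rw [single_sub_single_dotProduct, hxy v hv, sub_self]

lemma le_effResM (hL : L.PosSemidef) (hxy : ∀ v, L *ᵥ v = 0 → v x = v y) (z : n → ℝ) :
    2 * (z x - z y) - z ⬝ᵥ (L *ᵥ z) ≤ effResM L x y := by
  rw [effResM_eq_dotProduct hL.1, ← single_sub_single_dotProduct]
  exact hL.two_mul_dotProduct_sub_le ((isMoorePenroseInverse_pinv hL.1).mulVec_mulVec_eq_self
    (isHermitian_iff_isSymm.mp hL.1) fun _ => single_sub_single_dotProduct_eq_zero hxy) z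

lemma exists_potential_effResM (hL : L.PosSemidef) (hxy : ∀ v, L *ᵥ v = 0 → v x = v y) {c : ℝ}
    (hc : ∀ μ ∈ spectrum ℝ L, μ ≠ 0 → c ≤ μ) :
    ∃ z : n → ℝ, z x - z y = effResM L x y ∧ z ⬝ᵥ (L *ᵥ z) = effResM L x y ∧
      c * (z ⬝ᵥ z) ≤ effResM L x y := by
  set b : n → ℝ := Pi.single x 1 - Pi.single y 1
  set P := pinv L
  have hLs : L.IsSymm := isHermitian_iff_isSymm.mp hL.1
  have hP := isMoorePenroseInverse_pinv hL.1
  have hLz : L *ᵥ (P *ᵥ b) = b :=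
    hP.mulVec_mulVec_eq_self hLs fun _ => single_sub_single_dotProduct_eq_zero hxy
  have hω : b ⬝ᵥ (P *ᵥ b) = effResM L x y := (effResM_eq_dotProduct hL.1 x y).symm
  have hdiff : (P *ᵥ b) x - (P *ᵥ b) y = effResM L x y := by
    rw [← single_sub_single_dotProduct, hω]
  have hPL : P * L = L * P := by
    rw [← hP.2.2.2, transpose_mul, hLs.eq, (isSymm_pinv hL.1).eq]
  have hrange : L *ᵥ (P *ᵥ (P *ᵥ b)) = P *ᵥ b := by
    rw [mulVec_mulVec, mulVec_mulVec, ← hPL, hP.2.1]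
  refine ⟨P *ᵥ b, hdiff, ?_, ?_⟩
  · rw [hLz, dotProduct_comm, hω]
  · have h := hL.1.mul_dotProduct_le_of_le_spectrum hc (P *ᵥ (P *ᵥ b))
    rwa [hrange, hLz, dotProduct_comm (P *ᵥ b) b, hω] at h

end EffectiveResistance

namespace SimpleGraph

variable {V W : Type*} [Fintype V] [DecidableEq V] [Fintype W] [DecidableEq W]

lemma effRes_eq_effResM (G : SimpleGraph V) [DecidableRel G.Adj] (x y : V) :
    effRes G x y = effResM (G.lapMatrix ℝ) x y := by
  unfold effRes
  congr

lemma le_effRes (G : SimpleGraph V) [DecidableRel G.Adj] {x y : V} (hxy : G.Reachable x y)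
    (z : V → ℝ) : 2 * (z x - z y) - z ⬝ᵥ (G.lapMatrix ℝ *ᵥ z) ≤ effRes G x y := by
  rw [effRes_eq_effResM]
  exact le_effResM (posSemidef_lapMatrix ℝ G)
    (fun v hv => (lapMatrix_mulVec_eq_zero_iff_forall_reachable G).mp hv x y hxy) z

lemma exists_potential_effRes (G : SimpleGraph V) [DecidableRel G.Adj] {x y : V}
    (hxy : G.Reachable x y) {c : ℝ} (hc : ∀ μ ∈ spectrum ℝ (G.lapMatrix ℝ), μ ≠ 0 → c ≤ μ) :
    ∃ z : V → ℝ, z x - z y = effRes G x y ∧ z ⬝ᵥ (G.lapMatrix ℝ *ᵥ z) = effRes G x y ∧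
      c * (z ⬝ᵥ z) ≤ effRes G x y := by
  rw [effRes_eq_effResM]
  exact exists_potential_effResM (posSemidef_lapMatrix ℝ G)
    (fun v hv => (lapMatrix_mulVec_eq_zero_iff_forall_reachable G).mp hv x y hxy) hc

lemma lapMatrix_boxProd_mulVec (G : SimpleGraph V) (H : SimpleGraph W) [DecidableRel G.Adj]
    [DecidableRel H.Adj] [DecidableRel (G □ H).Adj] (f : V → ℝ) (g : W → ℝ) :
    (G □ H).lapMatrix ℝ *ᵥ (fun p => f p.1 * g p.2)
      = fun p => (G.lapMatrix ℝ *ᵥ f) p.1 * g p.2 + f p.1 * (H.lapMatrix ℝ *ᵥ g) p.2 := by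
  ext ⟨a, b⟩
  simp only [lapMatrix_mulVec_apply, degree_boxProd, neighborFinset_boxProd, Finset.sum_disjUnion,
    Finset.sum_product, Finset.sum_singleton, ← Finset.sum_mul, ← Finset.mul_sum]
  push_cast
  ring

lemma dotProduct_lapMatrix_boxProd_mulVec (G : SimpleGraph V) (H : SimpleGraph W)
    [DecidableRel G.Adj] [DecidableRel H.Adj] [DecidableRel (G □ H).Adj] (f : V → ℝ) (g : W → ℝ) :
    (fun p : V × W => f p.1 * g p.2) ⬝ᵥ ((G □ H).lapMatrix ℝ *ᵥ (fun p => f p.1 * g p.2))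
      = (f ⬝ᵥ (G.lapMatrix ℝ *ᵥ f)) * (g ⬝ᵥ g) + (f ⬝ᵥ f) * (g ⬝ᵥ (H.lapMatrix ℝ *ᵥ g)) := by
  rw [lapMatrix_boxProd_mulVec]
  simp only [dotProduct, Fintype.sum_prod_type, Finset.sum_mul_sum, ← Finset.sum_add_distrib]
  refine Finset.sum_congr rfl fun a _ => Finset.sum_congr rfl fun b _ => ?_
  ring

lemma dotProduct_lapMatrix_mulVec_single_add_const (H : SimpleGraph W) [DecidableRel H.Adj]
    (w : W) (α β : ℝ) :
    (Pi.single w α + fun _ => β) ⬝ᵥ (H.lapMatrix ℝ *ᵥ (Pi.single w α + fun _ => β))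
      = α ^ 2 * H.degree w := by
  have hconst : H.lapMatrix ℝ *ᵥ (fun _ => β) = 0 := by
    rw [show (fun _ : W => β) = β • fun _ => 1 by ext; simp, mulVec_smul,
      lapMatrix_mulVec_const_eq_zero, smul_zero]
  have hsingle : (H.lapMatrix ℝ *ᵥ Pi.single w α) w = H.degree w * α := by
    rw [lapMatrix_mulVec_apply, Pi.single_eq_same, Finset.sum_eq_zero fun u hu => by
      simp [(H.ne_of_adj ((mem_neighborFinset H w u).mp hu)).symm], sub_zero]
  rw [mulVec_add, hconst, add_zero, add_dotProduct, single_dotProduct, hsingle,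
    ← (isSymm_lapMatrix ℝ H).eq, dotProduct_transpose_mulVec, hconst,
    dotProduct_zero]
  ring

lemma dotProduct_self_single_add_const (w : W) (α β : ℝ) :
    (Pi.single w α + fun _ => β) ⬝ᵥ (Pi.single w α + fun _ => β)
      = α ^ 2 + 2 * α * β + Fintype.card W * β ^ 2 := by
  have hconst : (fun _ : W => β) ⬝ᵥ (fun _ => β) = Fintype.card W * β ^ 2 := by
    simp [dotProduct, sq]
  rw [add_dotProduct, dotProduct_add, dotProduct_add, single_dotProduct, single_dotProduct,
    dotProduct_single, Pi.single_eq_same, hconst]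
  ring

lemma degree_le_mul_of_spectrum_le (H : SimpleGraph W) [DecidableRel H.Adj] {C : ℝ}
    (hC : ∀ μ ∈ spectrum ℝ (H.lapMatrix ℝ), μ ≤ C) (w : W) :
    (H.degree w : ℝ) ≤ C * (1 - (Fintype.card W : ℝ)⁻¹) := by
  have hn : (Fintype.card W : ℝ) ≠ 0 := by
    have : Nonempty W := ⟨w⟩
    positivity
  have h := (isHermitian_lapMatrix ℝ H).dotProduct_mulVec_le_of_spectrum_le hC
    (Pi.single w 1 + fun _ => -(Fintype.card W : ℝ)⁻¹)
  rw [dotProduct_lapMatrix_mulVec_single_add_const, dotProduct_self_single_add_const] at h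
  convert h using 2
  · ring
  · field_simp
    ring

theorem mul_effRes_le_effRes_boxProd (G₁ : SimpleGraph V) (G₂ : SimpleGraph W) {lam₂ lamMax : ℝ}
    (hlam₂ : 0 < lam₂) (hG₁ : ∀ μ ∈ spectrum ℝ (G₁.lapMatrix ℝ), μ ≠ 0 → lam₂ ≤ μ)
    (hG₂ : ∀ μ ∈ spectrum ℝ (G₂.lapMatrix ℝ), μ ≤ lamMax) {v₁ w₁ : V} (h : G₁.Reachable v₁ w₁)
    (v₂ : W) (t : ℝ) :
    ((Fintype.card W : ℝ)⁻¹ + (1 - (Fintype.card W : ℝ)⁻¹) * (2 * t - t ^ 2 * (1 + lamMax / lam₂)))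
        * effRes G₁ v₁ w₁ ≤ effRes (G₁ □ G₂) (v₁, v₂) (w₁, v₂) := by
  have hn : (Fintype.card W : ℝ) ≠ 0 := by
    have : Nonempty W := ⟨v₂⟩
    positivity
  obtain ⟨z, hz_diff, hz_energy, hz_norm⟩ := G₁.exists_potential_effRes h hG₁
  have key := (G₁ □ G₂).le_effRes
    ((reachable_boxProd (x := (v₁, v₂)) (y := (w₁, v₂))).mpr ⟨h, Reachable.rfl⟩)
    fun p => z p.1 * (Pi.single v₂ t + fun _ => (1 - t) / Fintype.card W : W → ℝ) p.2
  rw [dotProduct_lapMatrix_boxProd_mulVec, dotProduct_lapMatrix_mulVec_single_add_const,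
    dotProduct_self_single_add_const, hz_energy] at key
  simp only [Pi.add_apply, Pi.single_eq_same, ← sub_mul, hz_diff] at key
  set ω := effRes G₁ v₁ w₁
  set n := (Fintype.card W : ℝ)
  have hω : 0 ≤ ω := hz_norm.trans' <|
    mul_nonneg hlam₂.le (by simpa using dotProduct_self_star_nonneg z)
  have hf : 2 * (t + (1 - t) / n) - (t ^ 2 + 2 * t * ((1 - t) / n) + n * ((1 - t) / n) ^ 2)
      = n⁻¹ + (1 - n⁻¹) * (2 * t - t ^ 2) := by
    field_simp
    ring
  have hcross : (z ⬝ᵥ z) * G₂.degree v₂ ≤ ω * (lamMax * (1 - n⁻¹)) / lam₂ := by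
    rw [le_div_iff₀ hlam₂]
    linarith [mul_le_mul hz_norm (G₂.degree_le_mul_of_spectrum_le hG₂ v₂) (by positivity) hω]
  have herr : (z ⬝ᵥ z) * (t ^ 2 * G₂.degree v₂) ≤ ω * ((1 - n⁻¹) * (t ^ 2 * (lamMax / lam₂))) :=
    calc (z ⬝ᵥ z) * (t ^ 2 * G₂.degree v₂) = t ^ 2 * ((z ⬝ᵥ z) * G₂.degree v₂) := by ring
      _ ≤ t ^ 2 * (ω * (lamMax * (1 - n⁻¹)) / lam₂) := by gcongr
      _ = ω * ((1 - n⁻¹) * (t ^ 2 * (lamMax / lam₂))) := by ring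
  linear_combination key + herr - ω * hf

end SimpleGraph

theorem product_edge_effres_lower_bound_general
    {V₁ V₂ : Type*} [Fintype V₁] [DecidableEq V₁] [Fintype V₂] [DecidableEq V₂]
    (G₁ : SimpleGraph V₁) (G₂ : SimpleGraph V₂)
    (lam₂ lamMax : ℝ)
    -- `lam₂` is the second-smallest Laplacian eigenvalue of the connected graph `G₁`,
    -- i.e. its smallest nonzero eigenvalue:
    (hlam₂ : lam₂ ∈ spectrum ℝ (G₁.lapMatrix ℝ) ∧ lam₂ ≠ 0 ∧
      ∀ μ ∈ spectrum ℝ (G₁.lapMatrix ℝ), μ ≠ 0 → lam₂ ≤ μ)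
    -- `lamMax` is the largest Laplacian eigenvalue of `G₂`:
    (hlamMax : lamMax ∈ spectrum ℝ (G₂.lapMatrix ℝ) ∧
      ∀ μ ∈ spectrum ℝ (G₂.lapMatrix ℝ), μ ≤ lamMax)
    (v₁ w₁ : V₁) (hadj : G₁.Adj v₁ w₁) (v₂ : V₂) :
    ((Fintype.card V₂ : ℝ)⁻¹
        + (1 - (Fintype.card V₂ : ℝ)⁻¹) * (lam₂ / (lam₂ + lamMax)))
        * effRes G₁ v₁ w₁
      ≤ effRes (G₁.boxProd G₂) (v₁, v₂) (w₁, v₂) := by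
  have hlam₂_pos : 0 < lam₂ := lt_of_le_of_ne
    ((G₁.posSemidef_lapMatrix ℝ).nonneg_of_mem_spectrum hlam₂.1) hlam₂.2.1.symm
  convert G₁.mul_effRes_le_effRes_boxProd G₂ hlam₂_pos hlam₂.2.2 hlamMax.2 hadj.reachable v₂
    (lam₂ / (lam₂ + lamMax)) using 4
  field_simp
  ring

theorem product_edge_effres_lower_bound
    {V₁ V₂ : Type*} [Fintype V₁] [DecidableEq V₁] [Fintype V₂] [DecidableEq V₂]
    (G₁ : SimpleGraph V₁) (G₂ : SimpleGraph V₂)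
    (h₁ : G₁.Connected) (h₂ : G₂.Connected)
    (lam₂ lamMax : ℝ)
    -- `lam₂` is the second-smallest Laplacian eigenvalue of the connected graph `G₁`,
    -- i.e. its smallest nonzero eigenvalue:
    (hlam₂ : lam₂ ∈ spectrum ℝ (G₁.lapMatrix ℝ) ∧ lam₂ ≠ 0 ∧
      ∀ μ ∈ spectrum ℝ (G₁.lapMatrix ℝ), μ ≠ 0 → lam₂ ≤ μ)
    -- `lamMax` is the largest Laplacian eigenvalue of `G₂`:
    (hlamMax : lamMax ∈ spectrum ℝ (G₂.lapMatrix ℝ) ∧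
      ∀ μ ∈ spectrum ℝ (G₂.lapMatrix ℝ), μ ≤ lamMax)
    (v₁ w₁ : V₁) (hadj : G₁.Adj v₁ w₁) (v₂ : V₂) :
    ((Fintype.card V₂ : ℝ)⁻¹
        + (1 - (Fintype.card V₂ : ℝ)⁻¹) * (lam₂ / (lam₂ + lamMax)))
        * effRes G₁ v₁ w₁
      ≤ effRes (G₁.boxProd G₂) (v₁, v₂) (w₁, v₂) :=
  product_edge_effres_lower_bound_general G₁ G₂ lam₂ lamMax hlam₂ hlamMax v₁ w₁ hadj v₂
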